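/- arXiv:2307.12016 — 6 statements merged into one kernel-verified Lean document; each statement's English description precedes it below -/
import Mathlib

section
/- Let X be a real (or complex) Banach space, ω > 0, and φ : ℝ → ℝ a twice continuously differentiable function with φ(0) = 1 and φ'(0) = −1. Let u : ℝ → X be a twice continuously differentiable curve on [0, ∞) (playing the role of the semigroup orbit u(t) = e^{tA}f, so that u'(t) = e^{tA}Af and u''(t) = e^{tA}A²f) such that for all t ≥ 0 one has ‖u(t)‖ ≤ φ(ωt)·‖u(0)‖ and ‖u''(t)‖ ≤ φ''(ωt)·‖u''(0)‖. Then, setting a = ‖u(0)‖, b = ‖u'(0)‖/ω and c = ‖u''(0)‖/ω², the dynamical inequality φ(s)·(a + c) + s·(c − b) + (a − c) ≥ 0 holds for every s ≥ 0. -/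
/-!
Taylor's formula of order one for `u` on `[0, t]` has remainder `∫₀ᵗ (t - τ) u''(τ) dτ`; by
`‖u''(τ)‖ ≤ φ''(ωτ) ‖u''(0)‖` it is majorised by the remainder of the real function
`‖u''(0)‖ φ(ω·)/ω²`, which gives `‖u(t) - u(0) - t u'(0)‖ ≤ ‖u''(0)‖ ((φ(ωt) - 1)/ω² + t/ω)`.
Together with `t ‖u'(0)‖ ≤ ‖u(t)‖ + ‖u(0)‖ + ‖u(t) - u(0) - t u'(0)‖` and the bound on `‖u(t)‖`
this is the dynamical inequality at `s = ωt`. The majorisation is a mean value inequality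
comparing the derivatives of `τ ↦ u(τ) + (t - τ) u'(τ)` and of its real counterpart, so no
integral in `X` is formed.
-/

open Set

section

variable {E : Type*} [NormedAddCommGroup E] [NormedSpace ℝ E] {a b : ℝ}

theorem norm_image_sub_le_of_norm_deriv_le_deriv_segment {f f' : ℝ → E} {g g' : ℝ → ℝ}
    (hf : ∀ x ∈ Icc a b, HasDerivWithinAt f (f' x) (Icc a b) x)
    (hg : ∀ x, HasDerivAt g (g' x) x) (bound : ∀ x ∈ Ico a b, ‖f' x‖ ≤ g' x) :
    ∀ x ∈ Icc a b, ‖f x - f a‖ ≤ g x - g a := by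
  refine image_norm_le_of_norm_deriv_right_le_deriv_boundary (f := fun x ↦ f x - f a)
    (fun x hx ↦ (hf x hx).continuousWithinAt.sub continuousWithinAt_const) (fun x hx ↦ ?_)
    (by simp) (fun x ↦ (hg x).sub_const (g a)) bound
  exact ((hf x (Ico_subset_Icc_self hx)).mono_of_mem_nhdsWithin
    (Icc_mem_nhdsGE_of_mem hx)).sub_const (f a)

theorem norm_sub_sub_smul_le_of_norm_deriv2_le_deriv2 {f f' f'' : ℝ → E} {g g' g'' : ℝ → ℝ}
    (hab : a ≤ b)
    (hf : ∀ x ∈ Icc a b, HasDerivWithinAt f (f' x) (Icc a b) x)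
    (hf' : ∀ x ∈ Icc a b, HasDerivWithinAt f' (f'' x) (Icc a b) x)
    (hg : ∀ x, HasDerivAt g (g' x) x) (hg' : ∀ x, HasDerivAt g' (g'' x) x)
    (bound : ∀ x ∈ Ico a b, ‖f'' x‖ ≤ g'' x) :
    ‖f b - f a - (b - a) • f' a‖ ≤ g b - g a - (b - a) * g' a := by
  have hF : ∀ x ∈ Icc a b, HasDerivWithinAt (fun x ↦ f x + (b - x) • f' x)
      ((b - x) • f'' x) (Icc a b) x := fun x hx ↦
    ((hf x hx).add (((hasDerivWithinAt_id x _).const_sub b).smul (hf' x hx))).congr_deriv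
      (by simp only [id]; module)
  have hG : ∀ x, HasDerivAt (fun x ↦ g x + (b - x) * g' x) ((b - x) * g'' x) x := fun x ↦
    ((hg x).add (((hasDerivAt_id x).const_sub b).mul (hg' x))).congr_deriv
      (by simp only [id]; ring)
  have hbound : ∀ x ∈ Ico a b, ‖(b - x) • f'' x‖ ≤ (b - x) * g'' x := by
    intro x hx
    have hbx : 0 ≤ b - x := sub_nonneg.mpr hx.2.le
    rw [norm_smul, Real.norm_of_nonneg hbx]
    exact mul_le_mul_of_nonneg_left (bound x hx) hbx
  have := norm_image_sub_le_of_norm_deriv_le_deriv_segment hF hG hbound b (right_mem_Icc.mpr hab)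
  simp only [sub_self, zero_smul, zero_mul, add_zero] at this
  rwa [sub_sub, sub_sub]

theorem hasDerivAt_const_mul_comp_mul {ψ ψ' : ℝ → ℝ} (hψ : ∀ x, HasDerivAt ψ (ψ' x) x)
    (c ω x : ℝ) : HasDerivAt (fun τ ↦ c * ψ (ω * τ)) (c * ω * ψ' (ω * x)) x :=
  (((hψ (ω * x)).comp x ((hasDerivAt_id x).const_mul ω)).const_mul c).congr_deriv (by ring)

end

theorem landau_kato_dynamical_inequality_general
    {X : Type*} [NormedAddCommGroup X] [NormedSpace ℝ X]
    (ω : ℝ) (hω : 0 < ω)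
    (φ : ℝ → ℝ) (hφ : ContDiff ℝ 2 φ) (hφ0 : φ 0 = 1) (hφ'0 : deriv φ 0 = -1)
    (u u' u'' : ℝ → X)
    (hu : ∀ t ∈ Set.Ici (0:ℝ), HasDerivWithinAt u (u' t) (Set.Ici 0) t)
    (hu' : ∀ t ∈ Set.Ici (0:ℝ), HasDerivWithinAt u' (u'' t) (Set.Ici 0) t)
    (hbound : ∀ t ≥ (0:ℝ), ‖u t‖ ≤ φ (ω * t) * ‖u 0‖)
    (hbound'' : ∀ t ≥ (0:ℝ), ‖u'' t‖ ≤ deriv (deriv φ) (ω * t) * ‖u'' 0‖) :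
    ∀ s ≥ (0:ℝ),
      φ s * (‖u 0‖ + ‖u'' 0‖ / ω ^ 2) + s * (‖u'' 0‖ / ω ^ 2 - ‖u' 0‖ / ω)
        + (‖u 0‖ - ‖u'' 0‖ / ω ^ 2) ≥ 0 := by
  intro s hs
  obtain ⟨t, ht, rfl⟩ : ∃ t ≥ 0, s = ω * t := ⟨s / ω, by positivity, by field_simp⟩
  have hφ' : ∀ x, HasDerivAt φ (deriv φ x) x := fun x ↦
    (hφ.differentiable (by norm_num) x).hasDerivAt
  have hφ'' : ∀ x, HasDerivAt (deriv φ) (deriv (deriv φ) x) x := fun x ↦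
    ((hφ.deriv' (n := 1)).differentiable one_ne_zero x).hasDerivAt
  have hsub : Icc 0 t ⊆ Ici 0 := Icc_subset_Ici_self
  set c := ‖u'' 0‖ / ω ^ 2 with hc
  have hrem := norm_sub_sub_smul_le_of_norm_deriv2_le_deriv2 ht
    (fun x hx ↦ (hu x (hsub hx)).mono hsub) (fun x hx ↦ (hu' x (hsub hx)).mono hsub)
    (hasDerivAt_const_mul_comp_mul hφ' c ω) (hasDerivAt_const_mul_comp_mul hφ'' (c * ω) ω)
    (fun x hx ↦ (hbound'' x hx.1).trans_eq (by rw [hc]; field_simp))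
  simp only [sub_zero, mul_zero, hφ0, hφ'0] at hrem
  have htri : t * ‖u' 0‖ ≤ ‖u t‖ + ‖u 0‖ + ‖u t - u 0 - t • u' 0‖ := by
    calc t * ‖u' 0‖ = ‖(u t - u 0) - (u t - u 0 - t • u' 0)‖ := by
          rw [sub_sub_cancel, norm_smul, Real.norm_of_nonneg ht]
      _ ≤ ‖u t‖ + ‖u 0‖ + ‖u t - u 0 - t • u' 0‖ := by
          grw [norm_sub_le, norm_sub_le]
  calc (0 : ℝ) ≤ φ (ω * t) * ‖u 0‖ + ‖u 0‖ + (c * φ (ω * t) - c + t * (c * ω)) - t * ‖u' 0‖ := by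
        linarith [hbound t ht]
    _ = _ := by rw [hc]; field_simp; ring

/-- Inequality (1.5) of Theorem 1.1: the dynamical inequality for a C² orbit
with weight function φ normalised by φ(0) = 1, φ'(0) = −1. -/
theorem landau_kato_dynamical_inequality
    {X : Type*} [NormedAddCommGroup X] [NormedSpace ℝ X] [CompleteSpace X]
    (ω : ℝ) (hω : 0 < ω)
    (φ : ℝ → ℝ) (hφ : ContDiff ℝ 2 φ) (hφ0 : φ 0 = 1) (hφ'0 : deriv φ 0 = -1)
    (u u' u'' : ℝ → X)
    (hu : ∀ t ∈ Set.Ici (0:ℝ), HasDerivWithinAt u (u' t) (Set.Ici 0) t)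
    (hu' : ∀ t ∈ Set.Ici (0:ℝ), HasDerivWithinAt u' (u'' t) (Set.Ici 0) t)
    (hu'' : ContinuousOn u'' (Set.Ici 0))
    (hbound : ∀ t ≥ (0:ℝ), ‖u t‖ ≤ φ (ω * t) * ‖u 0‖)
    (hbound'' : ∀ t ≥ (0:ℝ), ‖u'' t‖ ≤ deriv (deriv φ) (ω * t) * ‖u'' 0‖) :
    ∀ s ≥ (0:ℝ),
      φ s * (‖u 0‖ + ‖u'' 0‖ / ω ^ 2) + s * (‖u'' 0‖ / ω ^ 2 - ‖u' 0‖ / ω)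
        + (‖u 0‖ - ‖u'' 0‖ / ω ^ 2) ≥ 0 :=
  landau_kato_dynamical_inequality_general ω hω φ hφ hφ0 hφ'0 u u' u'' hu hu' hbound hbound''
end

section
/- Let X be a real (or complex) Banach space, ω > 0, and φ : ℝ → ℝ a twice continuously differentiable function with φ(0) = 1, φ'(0) = −1, satisfying in addition φ(s) ≤ 1 and φ(s) ≤ 1 − s + s²/2 for all s ≥ 0. Let u : ℝ → X be a twice continuously differentiable curve on [0, ∞) such that for all t ≥ 0 one has ‖u(t)‖ ≤ φ(ωt)·‖u(0)‖ and ‖u''(t)‖ ≤ φ''(ωt)·‖u''(0)‖. Then ‖u'(0)‖² ≤ 4·‖u(0)‖·‖u''(0)‖. -/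
/-! Write `u t = u 0 + t • u' 0 + R t`. The scalar function `g t = ‖u'' 0‖ φ(ωt) / ω²` has
`g'' t = ‖u'' 0‖ φ''(ωt) ≥ ‖u'' t‖`, so two comparison (fencing) arguments give
`‖R t‖ ≤ g t - g 0 - t g' 0`, which the quadratic bound on `φ` turns into `‖u'' 0‖ t² / 2`.
Since `‖u t‖ ≤ ‖u 0‖`, this yields `t ‖u' 0‖ ≤ 2 ‖u 0‖ + t² ‖u'' 0‖ / 2` for every `t > 0`;
a quadratic in `t` that is nonnegative everywhere has nonpositive discriminant. -/

open Set

theorem sq_le_four_mul_mul_of_forall_mul_le {a b c : ℝ} (ha : 0 ≤ a) (hb : 0 ≤ b) (hc : 0 ≤ c)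
    (h : ∀ t > 0, t * b ≤ 2 * a + t ^ 2 / 2 * c) : b ^ 2 ≤ 4 * a * c := by
  have hquad : ∀ x : ℝ, 0 ≤ c / 2 * (x * x) + -b * x + 2 * a := by
    intro x
    rcases le_or_gt x 0 with hx | hx
    · nlinarith
    · nlinarith [h x hx]
  have := discrim_le_zero hquad
  rw [discrim] at this
  linarith

theorem HasDerivAt.comp_const_mul_div {f : ℝ → ℝ} {f' ω t : ℝ} (hω : ω ≠ 0)
    (hf : HasDerivAt f f' (ω * t)) : HasDerivAt (fun s => f (ω * s) / ω) f' t := by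
  have := (hf.comp t ((hasDerivAt_id t).const_mul ω)).div_const ω
  simpa [hω] using this

section Comparison

variable {E : Type*} [NormedAddCommGroup E] [NormedSpace ℝ E]

theorem norm_sub_le_sub_of_norm_deriv_le {f f' : ℝ → E} {g g' : ℝ → ℝ}
    (hf : ∀ t ∈ Ici (0:ℝ), HasDerivWithinAt f (f' t) (Ici 0) t)
    (hg : ∀ t ∈ Ici (0:ℝ), HasDerivWithinAt g (g' t) (Ici 0) t)
    (hbound : ∀ t ≥ (0:ℝ), ‖f' t‖ ≤ g' t) {t : ℝ} (ht : 0 ≤ t) :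
    ‖f t - f 0‖ ≤ g t - g 0 := by
  have hsub : ∀ {x}, x ∈ Ico (0:ℝ) t → Ici x ⊆ Ici 0 := fun hx => Ici_subset_Ici.mpr hx.1
  refine image_norm_le_of_norm_deriv_right_le_deriv_boundary' (f := fun s => f s - f 0)
    (B := fun s => g s - g 0) ?_ (fun x hx => ((hf x hx.1).mono (hsub hx)).sub_const _)
    (by simp) ?_ (fun x hx => ((hg x hx.1).mono (hsub hx)).sub_const _)
    (fun x hx => hbound x hx.1) ⟨ht, le_rfl⟩
  · exact fun x hx =>
      ((hf x hx.1).continuousWithinAt.mono Icc_subset_Ici_self).sub continuousWithinAt_const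
  · exact fun x hx =>
      ((hg x hx.1).continuousWithinAt.mono Icc_subset_Ici_self).sub continuousWithinAt_const

theorem norm_sub_sub_smul_le_of_norm_deriv2_le {u u' u'' : ℝ → E} {g g' g'' : ℝ → ℝ}
    (hu : ∀ t ∈ Ici (0:ℝ), HasDerivWithinAt u (u' t) (Ici 0) t)
    (hu' : ∀ t ∈ Ici (0:ℝ), HasDerivWithinAt u' (u'' t) (Ici 0) t)
    (hg : ∀ t ∈ Ici (0:ℝ), HasDerivWithinAt g (g' t) (Ici 0) t)
    (hg' : ∀ t ∈ Ici (0:ℝ), HasDerivWithinAt g' (g'' t) (Ici 0) t)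
    (hbound : ∀ t ≥ (0:ℝ), ‖u'' t‖ ≤ g'' t) {t : ℝ} (ht : 0 ≤ t) :
    ‖u t - u 0 - t • u' 0‖ ≤ g t - g 0 - t * g' 0 := by
  have key := norm_sub_le_sub_of_norm_deriv_le (f := fun s => u s - s • u' 0)
    (g := fun s => g s - s * g' 0)
    (fun s hs => by simpa using (hu s hs).fun_sub ((hasDerivWithinAt_id s _).smul_const (u' 0)))
    (fun s hs => by simpa using (hg s hs).fun_sub ((hasDerivWithinAt_id s _).mul_const (g' 0)))
    (fun s hs => norm_sub_le_sub_of_norm_deriv_le hu' hg' hbound hs) ht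
  convert key using 1 <;> simp only [zero_smul, zero_mul, sub_zero]
  · rw [sub_right_comm]
  · ring

theorem norm_sub_sub_smul_le_sq_div_two_mul {u u' u'' : ℝ → E} {φ : ℝ → ℝ} {ω c t : ℝ} (hω : 0 < ω)
    (hφ : ContDiff ℝ 2 φ) (hφ0 : φ 0 = 1) (hφ'0 : deriv φ 0 = -1)
    (hφquad : ∀ s ≥ (0:ℝ), φ s ≤ 1 - s + s ^ 2 / 2)
    (hu : ∀ t ∈ Ici (0:ℝ), HasDerivWithinAt u (u' t) (Ici 0) t)
    (hu' : ∀ t ∈ Ici (0:ℝ), HasDerivWithinAt u' (u'' t) (Ici 0) t) (hc : 0 ≤ c)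
    (hbound : ∀ t ≥ (0:ℝ), ‖u'' t‖ ≤ deriv (deriv φ) (ω * t) * c) (ht : 0 ≤ t) :
    ‖u t - u 0 - t • u' 0‖ ≤ t ^ 2 / 2 * c := by
  have hg (s : ℝ) : HasDerivAt (fun s => c * (φ (ω * s) / ω / ω)) (c * (deriv φ (ω * s) / ω)) s :=
    ((((hφ.differentiable two_ne_zero) (ω * s)).hasDerivAt.div_const ω).comp_const_mul_div
      hω.ne').const_mul c
  have hg' (s : ℝ) :
      HasDerivAt (fun s => c * (deriv φ (ω * s) / ω)) (c * deriv (deriv φ) (ω * s)) s :=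
    (hφ.differentiable_deriv_two (ω * s)).hasDerivAt.comp_const_mul_div hω.ne' |>.const_mul c
  calc ‖u t - u 0 - t • u' 0‖
      ≤ _ := norm_sub_sub_smul_le_of_norm_deriv2_le hu hu' (fun s _ => (hg s).hasDerivWithinAt)
        (fun s _ => (hg' s).hasDerivWithinAt) (fun s hs => (hbound s hs).trans_eq (mul_comm _ _)) ht
    _ = c * ((φ (ω * t) - 1 + ω * t) / ω ^ 2) := by
      rw [mul_zero, hφ0, hφ'0]
      field_simp
      ring
    _ ≤ c * (t ^ 2 / 2) := by
      refine mul_le_mul_of_nonneg_left ?_ hc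
      rw [div_le_iff₀ (by positivity)]
      nlinarith [hφquad (ω * t) (by positivity)]
    _ = t ^ 2 / 2 * c := mul_comm _ _

end Comparison

theorem landau_inequality_via_orbits_general
    {X : Type*} [NormedAddCommGroup X] [NormedSpace ℝ X]
    (ω : ℝ) (hω : 0 < ω)
    (φ : ℝ → ℝ) (hφ : ContDiff ℝ 2 φ) (hφ0 : φ 0 = 1) (hφ'0 : deriv φ 0 = -1)
    (hφle1 : ∀ s ≥ (0:ℝ), φ s ≤ 1)
    (hφquad : ∀ s ≥ (0:ℝ), φ s ≤ 1 - s + s ^ 2 / 2)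
    (u u' u'' : ℝ → X)
    (hu : ∀ t ∈ Set.Ici (0:ℝ), HasDerivWithinAt u (u' t) (Set.Ici 0) t)
    (hu' : ∀ t ∈ Set.Ici (0:ℝ), HasDerivWithinAt u' (u'' t) (Set.Ici 0) t)
    (hbound : ∀ t ≥ (0:ℝ), ‖u t‖ ≤ φ (ω * t) * ‖u 0‖)
    (hbound'' : ∀ t ≥ (0:ℝ), ‖u'' t‖ ≤ deriv (deriv φ) (ω * t) * ‖u'' 0‖) :
    ‖u' 0‖ ^ 2 ≤ 4 * ‖u 0‖ * ‖u'' 0‖ := by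
  refine sq_le_four_mul_mul_of_forall_mul_le (norm_nonneg _) (norm_nonneg _) (norm_nonneg _)
    fun t ht => ?_
  have hut : ‖u t‖ ≤ ‖u 0‖ :=
    (hbound t ht.le).trans (mul_le_of_le_one_left (norm_nonneg _) (hφle1 _ (by positivity)))
  have htaylor := norm_sub_sub_smul_le_sq_div_two_mul hω hφ hφ0 hφ'0 hφquad hu hu'
    (norm_nonneg _) hbound'' ht.le
  calc t * ‖u' 0‖ = ‖(u t - u 0) - (u t - u 0 - t • u' 0)‖ := by
        rw [sub_sub_cancel, norm_smul, Real.norm_of_nonneg ht.le]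
    _ ≤ ‖u t‖ + ‖u 0‖ + ‖u t - u 0 - t • u' 0‖ :=
        (norm_sub_le _ _).trans (add_le_add_left (norm_sub_le _ _) _)
    _ ≤ 2 * ‖u 0‖ + t ^ 2 / 2 * ‖u'' 0‖ := by linarith

/-- Inequality (1.6) of Theorem 1.1: the ω-localised Landau inequality
‖u'(0)‖² ≤ 4‖u(0)‖‖u''(0)‖ for a C² orbit with quadratically decaying weight. -/
theorem landau_inequality_via_orbits
    {X : Type*} [NormedAddCommGroup X] [NormedSpace ℝ X] [CompleteSpace X]
    (ω : ℝ) (hω : 0 < ω)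
    (φ : ℝ → ℝ) (hφ : ContDiff ℝ 2 φ) (hφ0 : φ 0 = 1) (hφ'0 : deriv φ 0 = -1)
    (hφle1 : ∀ s ≥ (0:ℝ), φ s ≤ 1)
    (hφquad : ∀ s ≥ (0:ℝ), φ s ≤ 1 - s + s ^ 2 / 2)
    (u u' u'' : ℝ → X)
    (hu : ∀ t ∈ Set.Ici (0:ℝ), HasDerivWithinAt u (u' t) (Set.Ici 0) t)
    (hu' : ∀ t ∈ Set.Ici (0:ℝ), HasDerivWithinAt u' (u'' t) (Set.Ici 0) t)
    (hu'' : ContinuousOn u'' (Set.Ici 0))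
    (hbound : ∀ t ≥ (0:ℝ), ‖u t‖ ≤ φ (ω * t) * ‖u 0‖)
    (hbound'' : ∀ t ≥ (0:ℝ), ‖u'' t‖ ≤ deriv (deriv φ) (ω * t) * ‖u'' 0‖) :
    ‖u' 0‖ ^ 2 ≤ 4 * ‖u 0‖ * ‖u'' 0‖ :=
  landau_inequality_via_orbits_general ω hω φ hφ hφ0 hφ'0 hφle1 hφquad u u' u'' hu hu' hbound
    hbound''
end

section
/- Let φ : ℝ → ℝ satisfy φ(s) ≤ 1 and φ(s) ≤ 1 − s + s²/2 for all s ≥ 0. Suppose a, b, c are nonnegative real numbers with a > 0 such that φ(s)·(a + c) + s·(c − b) + (a − c) ≥ 0 for all s ≥ 0. Then b² ≤ 4ac. -/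
/-- Section 3: the Landau-type inequality b² ≤ 4ac follows from the dynamical
inequality (1.5), using only φ ≤ 1 and φ(s) ≤ 1 − s + s²/2. -/
theorem landau_from_dynamical_inequality
    (φ : ℝ → ℝ)
    (hφle1 : ∀ s ≥ (0:ℝ), φ s ≤ 1)
    (hφquad : ∀ s ≥ (0:ℝ), φ s ≤ 1 - s + s ^ 2 / 2)
    (a b c : ℝ) (ha : 0 < a) (hb : 0 ≤ b) (hc : 0 ≤ c)
    (h : ∀ s ≥ (0:ℝ), φ s * (a + c) + s * (c - b) + (a - c) ≥ 0) :
    b ^ 2 ≤ 4 * a * c := by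
  -- Key bound: for all s ≥ 0, b * s ≤ 2 * a + s ^ 2 * c / 2
  have key : ∀ s ≥ (0:ℝ), b * s ≤ 2 * a + s ^ 2 * c / 2 := by
    intro s hs
    have h1 := hφle1 s hs
    have h2 := hφquad s hs
    have h3 := h s hs
    nlinarith [mul_le_mul_of_nonneg_right h1 ha.le, mul_le_mul_of_nonneg_right h2 hc]
  rcases eq_or_lt_of_le hb with hb0 | hb0
  · nlinarith
  rcases eq_or_lt_of_le hc with hc0 | hc0
  · -- c = 0: take s = 4a/b to force a contradiction with b > 0
    exfalso
    have hs : (0:ℝ) ≤ 4 * a / b := by positivity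
    have := key (4 * a / b) hs
    rw [← hc0] at this
    have hb' : b ≠ 0 := ne_of_gt hb0
    have heq : b * (4 * a / b) = 4 * a := by field_simp
    rw [heq] at this
    nlinarith

  · have hs : (0:ℝ) ≤ b / c := by positivity
    have := key (b / c) hs
    have hc' : c ≠ 0 := ne_of_gt hc0
    have h4 : b * (b / c) * c ≤ (2 * a + (b / c) ^ 2 * c / 2) * c :=
      mul_le_mul_of_nonneg_right this hc
    have e1 : b * (b / c) * c = b ^ 2 := by field_simp
    have e2 : (b / c) ^ 2 * c / 2 * c = b ^ 2 / 2 := by field_simp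
    nlinarith [e1, e2]
end

section
/- Let H be a complex (or real) inner product space, let f, g, h ∈ H, and let λ ≥ 0. If Re⟨h + λ·g, g + λ·f⟩ ≤ 0, then λ²·‖g‖² ≤ ‖h‖² + λ⁴·‖f‖². -/
/-!
Put `a = h`, `b = λ g`, `c = λ² f`. Then `a + b = h + λ g` and `b + c = λ (g + λ f)`, so the
dissipativity hypothesis says `re ⟪a + b, b + c⟫ ≤ 0`, and the Hilbertian identity
`‖a + b + c‖² + ‖b‖² = ‖a‖² + ‖c‖² + 2 re ⟪a + b, b + c⟫` gives `‖b‖² ≤ ‖a‖² + ‖c‖²`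
once the nonnegative term `‖a + b + c‖²` is dropped.
-/

open RCLike

open scoped InnerProductSpace

section

variable {𝕜 E : Type*} [RCLike 𝕜] [NormedAddCommGroup E] [InnerProductSpace 𝕜 E]

theorem norm_add_add_sq_add_norm_sq (a b c : E) :
    ‖a + b + c‖ ^ 2 + ‖b‖ ^ 2 = ‖a‖ ^ 2 + ‖c‖ ^ 2 + 2 * re ⟪a + b, b + c⟫_𝕜 := by
  rw [norm_add_sq (𝕜 := 𝕜), norm_add_sq (𝕜 := 𝕜)]
  simp only [inner_add_left, inner_add_right, map_add, inner_self_eq_norm_sq (𝕜 := 𝕜)]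
  ring

theorem norm_sq_le_of_re_inner_add_nonpos {a b c : E} (h : re ⟪a + b, b + c⟫_𝕜 ≤ 0) :
    ‖b‖ ^ 2 ≤ ‖a‖ ^ 2 + ‖c‖ ^ 2 := by
  nlinarith [norm_add_add_sq_add_norm_sq (𝕜 := 𝕜) a b c, sq_nonneg ‖a + b + c‖]

theorem sq_mul_norm_sq_le_of_re_inner_nonpos (f g h : E) {l : ℝ} (hl : 0 ≤ l)
    (hdis : re ⟪h + (l : 𝕜) • g, g + (l : 𝕜) • f⟫_𝕜 ≤ 0) :
    l ^ 2 * ‖g‖ ^ 2 ≤ ‖h‖ ^ 2 + l ^ 4 * ‖f‖ ^ 2 := by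
  have hsum : (l : 𝕜) • g + ((l ^ 2 : ℝ) : 𝕜) • f = (l : 𝕜) • (g + (l : 𝕜) • f) := by
    rw [smul_add, smul_smul, ofReal_pow, sq]
  have key := norm_sq_le_of_re_inner_add_nonpos (𝕜 := 𝕜) (a := h) (b := (l : 𝕜) • g)
    (c := ((l ^ 2 : ℝ) : 𝕜) • f) (by
      rw [hsum, inner_smul_right, re_ofReal_mul]
      exact mul_nonpos_of_nonneg_of_nonpos hl hdis)
  simpa only [norm_smul, norm_ofReal, abs_of_nonneg hl, abs_of_nonneg (sq_nonneg l), mul_pow,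
    ← pow_mul] using key

end

/-- Inequality (4.1): restricted dissipativity Re⟨h+λg, g+λf⟩ ≤ 0 implies
λ²‖g‖² ≤ ‖h‖² + λ⁴‖f‖². -/
theorem kato_step_inequality
    {H : Type*} [NormedAddCommGroup H] [InnerProductSpace ℂ H]
    (f g h : H) (l : ℝ) (hl : 0 ≤ l)
    (hdis : (inner ℂ (h + (l : ℂ) • g) (g + (l : ℂ) • f) : ℂ).re ≤ 0) :
    l ^ 2 * ‖g‖ ^ 2 ≤ ‖h‖ ^ 2 + l ^ 4 * ‖f‖ ^ 2 :=
  sq_mul_norm_sq_le_of_re_inner_nonpos (𝕜 := ℂ) f g h hl hdis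
end

section
/- Let H be a complex (or real) inner product space and let f, g, h ∈ H. If Re⟨h + λ·g, g + λ·f⟩ ≤ 0 for every λ > 0, then ‖g‖² ≤ 2·‖f‖·‖h‖. -/
/-!
Writing `p = λ g` and `q = λ² f`, the hypothesis at `λ` says `Re ⟪h + p, p + q⟫ ≤ 0`, i.e.
`‖2p + h + q‖ ≤ ‖h - q‖`; the parallelogram law then gives `‖p‖² ≤ ‖h‖² + ‖q‖²`, that is
`λ² ‖g‖² ≤ ‖h‖² + λ⁴ ‖f‖²` for all `λ > 0`. So the quadratic `‖f‖² s² - ‖g‖² s + ‖h‖²` is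
nonnegative for `s > 0`, hence everywhere, and its discriminant `‖g‖⁴ - 4 ‖f‖² ‖h‖²` is nonpositive.
-/

open RCLike

open scoped InnerProductSpace

section InnerProduct

variable {𝕜 E : Type*} [RCLike 𝕜] [NormedAddCommGroup E] [InnerProductSpace 𝕜 E]

theorem norm_sq_le_norm_sq_add_norm_sq_of_re_inner_add_add_nonpos {p h q : E}
    (hpq : re ⟪h + p, p + q⟫_𝕜 ≤ 0) : ‖p‖ ^ 2 ≤ ‖h‖ ^ 2 + ‖q‖ ^ 2 := by
  have hsum : ‖(h + p) + (p + q)‖ ^ 2 ≤ ‖(h + p) - (p + q)‖ ^ 2 := by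
    rw [norm_add_sq (𝕜 := 𝕜), norm_sub_sq (𝕜 := 𝕜)]
    linarith
  have hdiff : (h + p) - (p + q) = h - q := by abel
  have hpp : (h + p) + (p + q) - (h + q) = p + p := by abel
  have hpar₁ := parallelogram_law_with_norm 𝕜 ((h + p) + (p + q)) (h + q)
  have hpar₂ := parallelogram_law_with_norm 𝕜 h q
  rw [hpp, ← two_smul 𝕜 p, norm_smul, RCLike.norm_two] at hpar₁
  rw [hdiff] at hsum
  nlinarith [norm_nonneg ((h + p) + (p + q) + (h + q))]

theorem sq_mul_norm_sq_le_of_re_inner_add_smul_nonpos {f g h : E} {t : ℝ} (ht : 0 ≤ t)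
    (hdis : re ⟪h + (t : 𝕜) • g, g + (t : 𝕜) • f⟫_𝕜 ≤ 0) :
    t ^ 2 * ‖g‖ ^ 2 ≤ ‖h‖ ^ 2 + t ^ 4 * ‖f‖ ^ 2 := by
  have hscaled : re ⟪h + (t : 𝕜) • g, (t : 𝕜) • g + ((t ^ 2 : ℝ) : 𝕜) • f⟫_𝕜 ≤ 0 := by
    rw [ofReal_pow, sq, mul_smul, ← smul_add, inner_smul_right, re_ofReal_mul]
    exact mul_nonpos_of_nonneg_of_nonpos ht hdis
  have key := norm_sq_le_norm_sq_add_norm_sq_of_re_inner_add_add_nonpos hscaled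
  rwa [norm_smul, norm_smul, norm_ofReal, norm_ofReal, abs_of_nonneg ht,
    abs_of_nonneg (sq_nonneg t), mul_pow, mul_pow, ← pow_mul] at key

end InnerProduct

theorem le_two_mul_mul_of_forall_sq_mul_le {a y z : ℝ} (ha : 0 ≤ a) (hy : 0 ≤ y) (hz : 0 ≤ z)
    (h : ∀ t : ℝ, 0 < t → t ^ 2 * a ≤ z ^ 2 + t ^ 4 * y ^ 2) : a ≤ 2 * y * z := by
  have hquad : ∀ s : ℝ, 0 ≤ y ^ 2 * (s * s) + (-a) * s + z ^ 2 := by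
    intro s
    rcases le_or_gt s 0 with hs | hs
    · nlinarith [sq_nonneg (y * s)]
    · have := h (√s) (Real.sqrt_pos.mpr hs)
      rw [show (√s) ^ 4 = (√s ^ 2) ^ 2 by ring, Real.sq_sqrt hs.le] at this
      nlinarith
  have hdisc := discrim_le_zero hquad
  rw [discrim] at hdisc
  nlinarith [mul_nonneg hy hz]

/-- The Kato inequality (1.2): restricted dissipativity for all λ > 0 implies
‖g‖² ≤ 2‖f‖‖h‖. -/
theorem kato_inequality_from_dissipativity
    {H : Type*} [NormedAddCommGroup H] [InnerProductSpace ℂ H]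
    (f g h : H)
    (hdis : ∀ l : ℝ, 0 < l →
      (inner ℂ (h + (l : ℂ) • g) (g + (l : ℂ) • f) : ℂ).re ≤ 0) :
    ‖g‖ ^ 2 ≤ 2 * ‖f‖ * ‖h‖ :=
  le_two_mul_mul_of_forall_sq_mul_le (sq_nonneg _) (norm_nonneg f) (norm_nonneg h)
    fun l hl => sq_mul_norm_sq_le_of_re_inner_add_smul_nonpos (𝕜 := ℂ) hl.le (hdis l hl)
end

section
/- Let H be a complex (or real) Hilbert space and let f, g, h ∈ H. Suppose that for every λ > 0 there exists a curve v_λ : ℝ → H with v_λ(0) = g + λ·f, differentiable at 0 from within [0, ∞) with derivative v_λ'(0) = h + λ·g, and satisfying ‖v_λ(t)‖ ≤ ‖g + λ·f‖ for all t ≥ 0. Then ‖g‖² ≤ 2·‖f‖·‖h‖. -/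
/-!
Differentiating `t ↦ ‖v_λ t‖²` at its maximum `t = 0` gives `re ⟪g + λf, h + λg⟫ ≤ 0`, i.e.
`re ⟪g + a, g + b⟫ ≤ 0` with `a = λf`, `b = λ⁻¹h`. Since
`‖g + a + b‖² = ‖a‖² + ‖b‖² - ‖g‖² + 2 re ⟪g + a, g + b⟫`, this forces
`‖g‖² ≤ λ²‖f‖² + λ⁻²‖h‖²`, and minimising over `λ > 0` gives `‖g‖² ≤ 2‖f‖‖h‖`.
-/

open Set Filter Topology RCLike
open scoped InnerProductSpace

theorem IsLocalMaxOn.hasDerivWithinAt_Ici_nonpos {φ : ℝ → ℝ} {φ' a : ℝ}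
    (h : IsLocalMaxOn φ (Ici a) a) (hφ : HasDerivWithinAt φ φ' (Ici a) a) : φ' ≤ 0 := by
  have hone : (1 : ℝ) ∈ posTangentConeAt (Ici a) a :=
    mem_posTangentConeAt_of_segment_subset <| by
      rw [segment_eq_Icc (by linarith)]
      exact Icc_subset_Ici_self
  simpa using h.hasFDerivWithinAt_nonpos hφ.hasFDerivWithinAt hone

section InnerProductSpace

variable {𝕜 E : Type*} [RCLike 𝕜] [NormedAddCommGroup E] [InnerProductSpace 𝕜 E]

theorem re_inner_nonpos_of_hasDerivWithinAt_of_norm_le [NormedSpace ℝ E] {v : ℝ → E} {w : E}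
    (hv : HasDerivWithinAt v w (Ici 0) 0) (hle : ∀ t ≥ 0, ‖v t‖ ≤ ‖v 0‖) :
    re ⟪v 0, w⟫_𝕜 ≤ 0 := by
  have hderiv : HasDerivWithinAt (fun t ↦ ‖v t‖ ^ 2) (2 * re ⟪v 0, w⟫_𝕜) (Ici 0) 0 := by
    have := reCLM.hasFDerivAt.comp_hasDerivWithinAt 0 (hv.inner 𝕜 hv)
    simpa only [Function.comp_def, reCLM_apply, inner_self_eq_norm_sq, map_add,
      inner_re_symm w, ← two_mul] using this
  have hmax : IsLocalMaxOn (fun t ↦ ‖v t‖ ^ 2) (Ici 0) 0 :=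
    eventually_nhdsWithin_of_forall fun t ht ↦ pow_le_pow_left₀ (norm_nonneg _) (hle t ht) 2
  linarith [hmax.hasDerivWithinAt_Ici_nonpos hderiv]

theorem norm_sq_le_of_re_inner_add_add_nonpos {g a b : E} (h : re ⟪g + a, g + b⟫_𝕜 ≤ 0) :
    ‖g‖ ^ 2 ≤ ‖a‖ ^ 2 + ‖b‖ ^ 2 := by
  have hexpand : ‖g + a + b‖ ^ 2 = ‖a‖ ^ 2 + ‖b‖ ^ 2 - ‖g‖ ^ 2 + 2 * re ⟪g + a, g + b⟫_𝕜 := by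
    simp only [← inner_self_eq_norm_sq (𝕜 := 𝕜), inner_add_left, inner_add_right, map_add,
      inner_re_symm (𝕜 := 𝕜) b, inner_re_symm (𝕜 := 𝕜) a g]
    ring
  nlinarith [sq_nonneg ‖g + a + b‖]

end InnerProductSpace

theorem le_two_mul_of_forall_le_sq_add_sq {a b c : ℝ} (ha : 0 ≤ a) (hb : 0 ≤ b)
    (H : ∀ l > 0, c ≤ (l * a) ^ 2 + (b / l) ^ 2) : c ≤ 2 * a * b := by
  have hε : ∀ ε > 0, c ≤ 2 * (a + ε) * (b + ε) := by
    intro ε hε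
    -- `l² = (b + ε) / (a + ε)` balances the two terms; the shift by `ε` covers `a = 0` or `b = 0`.
    have hratio : 0 < (b + ε) / (a + ε) := by positivity
    set l := √((b + ε) / (a + ε))
    have hl : 0 < l := Real.sqrt_pos.2 hratio
    have hl2 : l ^ 2 = (b + ε) / (a + ε) := Real.sq_sqrt hratio.le
    calc c ≤ (l * a) ^ 2 + (b / l) ^ 2 := H l hl
      _ ≤ (l * (a + ε)) ^ 2 + ((b + ε) / l) ^ 2 := by gcongr <;> linarith
      _ = 2 * (a + ε) * (b + ε) := by
        rw [mul_pow, div_pow, hl2]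
        field_simp
        ring
  have hlim : Tendsto (fun ε ↦ 2 * (a + ε) * (b + ε)) (𝓝[>] 0) (𝓝 (2 * a * b)) := by
    have hcont : Continuous fun ε : ℝ ↦ 2 * (a + ε) * (b + ε) := by fun_prop
    simpa using (hcont.tendsto 0).mono_left nhdsWithin_le_nhds
  exact ge_of_tendsto hlim (eventually_nhdsWithin_of_forall hε)

theorem kato_inequality_via_orbits_general
    {H : Type*} [NormedAddCommGroup H] [InnerProductSpace ℂ H]
    (f g h : H)
    (horb : ∀ l : ℝ, 0 < l → ∃ v : ℝ → H,
      v 0 = g + (l : ℂ) • f ∧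
      HasDerivWithinAt v (h + (l : ℂ) • g) (Set.Ici 0) 0 ∧
      ∀ t ≥ (0:ℝ), ‖v t‖ ≤ ‖g + (l : ℂ) • f‖) :
    ‖g‖ ^ 2 ≤ 2 * ‖f‖ * ‖h‖ := by
  refine le_two_mul_of_forall_le_sq_add_sq (norm_nonneg f) (norm_nonneg h) fun l hl ↦ ?_
  obtain ⟨v, hv0, hderiv, hle⟩ := horb l hl
  have hdiss : re ⟪g + (l : ℂ) • f, h + (l : ℂ) • g⟫_ℂ ≤ 0 := by
    rw [← hv0] at hle ⊢
    exact re_inner_nonpos_of_hasDerivWithinAt_of_norm_le hderiv hle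
  have hscale : h + (l : ℂ) • g = (l : ℂ) • (g + ((l⁻¹ : ℝ) : ℂ) • h) := by
    rw [smul_add, smul_smul, ← Complex.ofReal_mul, mul_inv_cancel₀ hl.ne', Complex.ofReal_one,
      one_smul, add_comm]
  rw [hscale, inner_smul_right, re_to_complex, Complex.re_ofReal_mul] at hdiss
  have hkey := norm_sq_le_of_re_inner_add_add_nonpos (𝕜 := ℂ) (nonpos_of_mul_nonpos_right hdiss hl)
  rwa [norm_smul, norm_smul, Complex.norm_real, Complex.norm_real, Real.norm_of_nonneg hl.le,
    Real.norm_of_nonneg (inv_nonneg.2 hl.le), ← div_eq_inv_mul] at hkey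

/-- Theorem 4.2: the family of contraction orbital estimates along curves with
v_λ(0) = g + λf and v_λ'(0) = h + λg implies the Kato inequality ‖g‖² ≤ 2‖f‖‖h‖. -/
theorem kato_inequality_via_orbits
    {H : Type*} [NormedAddCommGroup H] [InnerProductSpace ℂ H] [CompleteSpace H]
    (f g h : H)
    (horb : ∀ l : ℝ, 0 < l → ∃ v : ℝ → H,
      v 0 = g + (l : ℂ) • f ∧
      HasDerivWithinAt v (h + (l : ℂ) • g) (Set.Ici 0) 0 ∧
      ∀ t ≥ (0:ℝ), ‖v t‖ ≤ ‖g + (l : ℂ) • f‖) :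
    ‖g‖ ^ 2 ≤ 2 * ‖f‖ * ‖h‖ :=
  kato_inequality_via_orbits_general f g h horb
end
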